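/- arXiv:2309.07946 — 4 statements merged into one kernel-verified Lean document; each statement's English description precedes it below -/
import Mathlib

section
/- Let κ > 0, σ > 0 and y > 0 be real numbers. Define h₀(y) = (κ+1)y/(κ+y), h₁(y) = κ(κ+1)³y/(κ+y)⁴ and h₂(y) = −κ(κ+1)⁵ y (κ² + 3σy + κ(y−2σ))/(σ(κ+y)⁷), and for real ε set h_ε(y) = h₀(y) + ε h₁(y) + ε² h₂(y). Then the invariance-equation residual R(ε) = f(h_ε(y), y) − ε · (h₀'(y) + ε h₁'(y) + ε² h₂'(y)) · g(h_ε(y), y), where h₀', h₁', h₂' denote the derivatives with respect to y, satisfies R(ε) = O(ε³) as ε → 0; i.e., there exist constants C > 0 and δ > 0 such that |R(ε)| ≤ C|ε|³ whenever |ε| < δ. -/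
/-- Fast vector field of the Michaelis–Menten slow subsystem. -/
noncomputable def MMf (κ x y : ℝ) : ℝ := y - ((κ + y) / (κ + 1)) * x

/-- Slow vector field of the Michaelis–Menten slow subsystem. -/
noncomputable def MMg (κ σ x y : ℝ) : ℝ := σ⁻¹ * (-(κ + 1) * y + (κ - σ + y) * x)

noncomputable def MMh0 (κ y : ℝ) : ℝ := (κ + 1) * y / (κ + y)

noncomputable def MMh1 (κ y : ℝ) : ℝ := κ * (κ + 1) ^ 3 * y / (κ + y) ^ 4

noncomputable def MMh2 (κ σ y : ℝ) : ℝ :=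
  -(κ * (κ + 1) ^ 5 * y * (κ ^ 2 + 3 * σ * y + κ * (y - 2 * σ))) / (σ * (κ + y) ^ 7)

noncomputable def MMhε (κ σ y ε : ℝ) : ℝ := MMh0 κ y + ε * MMh1 κ y + ε ^ 2 * MMh2 κ σ y

/-! Both vector fields are affine in `x`, so substituting `h_ε = h₀ + ε h₁ + ε² h₂` turns the
residual into a polynomial of degree 5 in `ε`. Its constant term is `f(h₀, y) = 0`, and `h₁`, `h₂`
are exactly the corrections that kill the coefficients of `ε` and `ε²`. The derivative `h₂'` is
multiplied by `ε³`, so its value never matters; the residual is `ε³` times a quadratic in `ε`. -/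

lemma hasDerivAt_MMh0 {κ y : ℝ} (h : κ + y ≠ 0) :
    HasDerivAt (MMh0 κ) (κ * (κ + 1) / (κ + y) ^ 2) y := by
  refine (((hasDerivAt_id y).const_mul (κ + 1)).div
    ((hasDerivAt_id y).const_add κ) h).congr_deriv ?_
  simp only [id, mul_one]
  field_simp
  ring

lemma hasDerivAt_MMh1 {κ y : ℝ} (h : κ + y ≠ 0) :
    HasDerivAt (MMh1 κ) (κ * (κ + 1) ^ 3 * (κ - 3 * y) / (κ + y) ^ 5) y := by
  refine (((hasDerivAt_id y).const_mul (κ * (κ + 1) ^ 3)).div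
    (((hasDerivAt_id y).const_add κ).pow 4) (pow_ne_zero 4 h)).congr_deriv ?_
  simp only [id, mul_one, Pi.pow_apply]
  field_simp
  ring

lemma MMf_MMh0_eq_zero {κ y : ℝ} (hκy : κ + y ≠ 0) (hκ : κ + 1 ≠ 0) : MMf κ (MMh0 κ y) y = 0 := by
  unfold MMf MMh0
  field_simp
  ring

lemma MMh1_cancels_first_order {κ σ y : ℝ} (hκy : κ + y ≠ 0) (hσ : σ ≠ 0) :
    (κ + y) / (κ + 1) * MMh1 κ y + κ * (κ + 1) / (κ + y) ^ 2 * MMg κ σ (MMh0 κ y) y = 0 := by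
  unfold MMh1 MMg MMh0
  field_simp
  ring

lemma MMh2_cancels_second_order {κ σ y : ℝ} (hκy : κ + y ≠ 0) (hσ : σ ≠ 0) :
    (κ + y) / (κ + 1) * MMh2 κ σ y +
      κ * (κ + 1) / (κ + y) ^ 2 * (σ⁻¹ * (κ - σ + y)) * MMh1 κ y +
      κ * (κ + 1) ^ 3 * (κ - 3 * y) / (κ + y) ^ 5 * MMg κ σ (MMh0 κ y) y = 0 := by
  unfold MMh2 MMh1 MMg MMh0
  field_simp
  ring

lemma exists_MM_residual_eq_cube_mul {κ σ y : ℝ} (hκy : κ + y ≠ 0) (hκ : κ + 1 ≠ 0)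
    (hσ : σ ≠ 0) (d₂ : ℝ) :
    ∃ a b c : ℝ, ∀ ε : ℝ,
      MMf κ (MMhε κ σ y ε) y -
          ε * (κ * (κ + 1) / (κ + y) ^ 2 + ε * (κ * (κ + 1) ^ 3 * (κ - 3 * y) / (κ + y) ^ 5) +
            ε ^ 2 * d₂) * MMg κ σ (MMhε κ σ y ε) y =
        ε ^ 3 * (a + b * ε + c * ε ^ 2) := by
  set d₀ := κ * (κ + 1) / (κ + y) ^ 2
  set d₁ := κ * (κ + 1) ^ 3 * (κ - 3 * y) / (κ + y) ^ 5
  set s := σ⁻¹ * (κ - σ + y)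
  set g₀ := MMg κ σ (MMh0 κ y) y
  refine ⟨-(d₀ * s * MMh2 κ σ y + d₁ * s * MMh1 κ y + d₂ * g₀),
    -(d₁ * s * MMh2 κ σ y + d₂ * s * MMh1 κ y), -(d₂ * s * MMh2 κ σ y), fun ε => ?_⟩
  have hf : MMf κ (MMhε κ σ y ε) y =
      MMf κ (MMh0 κ y) y - (κ + y) / (κ + 1) * (ε * MMh1 κ y + ε ^ 2 * MMh2 κ σ y) := by
    unfold MMf MMhε
    ring
  have hg : MMg κ σ (MMhε κ σ y ε) y = g₀ + s * (ε * MMh1 κ y + ε ^ 2 * MMh2 κ σ y) := by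
    unfold g₀ s MMg MMhε
    ring
  rw [hf, hg]
  linear_combination MMf_MMh0_eq_zero hκy hκ - ε * MMh1_cancels_first_order (σ := σ) hκy hσ -
    ε ^ 2 * MMh2_cancels_second_order hκy hσ

lemma exists_bound_of_eq_cube_mul_quadratic {R : ℝ → ℝ} {a b c : ℝ}
    (hR : ∀ ε, R ε = ε ^ 3 * (a + b * ε + c * ε ^ 2)) :
    ∃ C > (0 : ℝ), ∃ δ > (0 : ℝ), ∀ ε : ℝ, |ε| < δ → |R ε| ≤ C * |ε| ^ 3 := by
  refine ⟨|a| + |b| + |c| + 1, by positivity, 1, one_pos, fun ε hε => ?_⟩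
  have hquad : |a + b * ε + c * ε ^ 2| ≤ |a| + |b| + |c| + 1 := by
    have hb : |b| * |ε| ≤ |b| := mul_le_of_le_one_right (abs_nonneg b) hε.le
    have hc : |c| * |ε| ^ 2 ≤ |c| :=
      mul_le_of_le_one_right (abs_nonneg c) (pow_le_one₀ (abs_nonneg ε) hε.le)
    calc |a + b * ε + c * ε ^ 2| ≤ |a| + |b * ε| + |c * ε ^ 2| := abs_add_three _ _ _
      _ = |a| + |b| * |ε| + |c| * |ε| ^ 2 := by rw [abs_mul, abs_mul, abs_pow]
      _ ≤ |a| + |b| + |c| + 1 := by linarith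
  rw [hR, abs_mul, abs_pow, mul_comm]
  gcongr

/-- The invariance-equation residual of the `O(ε²)` regular expansion of the SIM of the
Michaelis–Menten slow subsystem is `O(ε³)` as `ε → 0`. -/
theorem mm_invariance_residual_isBigO (κ σ y : ℝ) (hκ : 0 < κ) (hσ : 0 < σ) (hy : 0 < y) :
    ∃ C > (0 : ℝ), ∃ δ > (0 : ℝ), ∀ ε : ℝ, |ε| < δ →
      |MMf κ (MMhε κ σ y ε) y -
        ε * (deriv (MMh0 κ) y + ε * deriv (MMh1 κ) y + ε ^ 2 * deriv (MMh2 κ σ) y) *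
          MMg κ σ (MMhε κ σ y ε) y| ≤ C * |ε| ^ 3 := by
  have hκy : κ + y ≠ 0 := by positivity
  obtain ⟨a, b, c, hR⟩ :=
    exists_MM_residual_eq_cube_mul hκy (by positivity) hσ.ne' (deriv (MMh2 κ σ) y)
  rw [(hasDerivAt_MMh0 hκy).deriv, (hasDerivAt_MMh1 hκy).deriv]
  exact exists_bound_of_eq_cube_mul_quadratic hR
end

section
/- Let a, b, k > 0, y > 0, z > 0 and ε > 0 be real numbers, set D = ky(ky+ε) + εz(2εy − k(a+y²)) and q = 1 + 4ε²ky(εby + z(2εz(a+y²) − y(ky + ε(2+a+y²))))/D², and assume D ≠ 0 and q ≥ 0. Define x = (yz/k + (y − z(a+y²))/(2ε) + ky²/(2ε²)) · (1 − √q). Then x exactly satisfies the implicit CSP one-iteration SIM equation for the 3D Sel'kov system: y²z − kxy + ε [y²(z(a+y²) − b) + (2yz − kx)(y − z(a+y²) − εx)]/(ky) = 0. -/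
/-!
Multiplied by `k y`, the implicit equation is the quadratic `ε²k x² − D x + C = 0` in `x`,
with `C = k y³ z + ε (y² (z (a + y²) − b) + 2 y z (y − z (a + y²)))`. Its discriminant
`D² − 4 ε² k C` equals `q D²`, so the stated `x = D (1 − √q) / (2 ε² k)` is one of the two roots
given by the quadratic formula.
-/

open Real

theorem quadratic_eq_zero_of_discrim_eq_mul_sq {a b c q x : ℝ} (ha : a ≠ 0) (hq : 0 ≤ q)
    (hdisc : discrim a b c = q * b ^ 2) (hx : x = -b * (1 - √q) / (2 * a)) :
    a * (x * x) + b * x + c = 0 := by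
  have hdisc' : discrim a b c = (b * √q) * (b * √q) := by
    rw [hdisc, mul_mul_mul_comm, mul_self_sqrt hq]; ring
  exact (quadratic_eq_zero_iff ha hdisc' x).2 (Or.inl (by rw [hx]; ring))

namespace Selkov

def coeffD (a k y z ε : ℝ) : ℝ :=
  k * y * (k * y + ε) + ε * z * (2 * ε * y - k * (a + y ^ 2))

def coeffC (a b k y z ε : ℝ) : ℝ :=
  k * y ^ 3 * z + ε * (y ^ 2 * (z * (a + y ^ 2) - b) + 2 * y * z * (y - z * (a + y ^ 2)))

theorem implicit_eq_quadratic_div {a b k y z ε x : ℝ} (hk : k ≠ 0) (hy : y ≠ 0) :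
    y ^ 2 * z - k * x * y +
      ε * (y ^ 2 * (z * (a + y ^ 2) - b) +
        (2 * y * z - k * x) * (y - z * (a + y ^ 2) - ε * x)) / (k * y) =
      (ε ^ 2 * k * (x * x) + -coeffD a k y z ε * x + coeffC a b k y z ε) / (k * y) := by
  rw [coeffD, coeffC]
  field_simp
  ring

theorem discrim_eq {a b k y z ε : ℝ} (hD : coeffD a k y z ε ≠ 0) :
    discrim (ε ^ 2 * k) (-coeffD a k y z ε) (coeffC a b k y z ε) =
      (1 + 4 * ε ^ 2 * k * y *
        (ε * b * y + z * (2 * ε * z * (a + y ^ 2) - y * (k * y + ε * (2 + a + y ^ 2)))) /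
          coeffD a k y z ε ^ 2) * (-coeffD a k y z ε) ^ 2 := by
  rw [discrim, neg_sq, add_mul, div_mul_cancel₀ _ (pow_ne_zero 2 hD), coeffC]
  ring

end Selkov

theorem selkov_csp_satisfies_implicit_general (a b k y z ε : ℝ)
    (hk : 0 < k) (hy : 0 < y) (hε : 0 < ε)
    (D q : ℝ)
    (hD : D = k * y * (k * y + ε) + ε * z * (2 * ε * y - k * (a + y ^ 2)))
    (hq : q = 1 + 4 * ε ^ 2 * k * y *
      (ε * b * y + z * (2 * ε * z * (a + y ^ 2) - y * (k * y + ε * (2 + a + y ^ 2)))) / D ^ 2)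
    (hDne : D ≠ 0) (hqnn : 0 ≤ q) (x : ℝ)
    (hx : x = (y * z / k + (y - z * (a + y ^ 2)) / (2 * ε) + k * y ^ 2 / (2 * ε ^ 2)) *
      (1 - Real.sqrt q)) :
    y ^ 2 * z - k * x * y +
      ε * (y ^ 2 * (z * (a + y ^ 2) - b) +
        (2 * y * z - k * x) * (y - z * (a + y ^ 2) - ε * x)) / (k * y) = 0 := by
  rw [← Selkov.coeffD] at hD
  subst hD
  rw [Selkov.implicit_eq_quadratic_div hk.ne' hy.ne', div_eq_zero_iff]
  left
  refine quadratic_eq_zero_of_discrim_eq_mul_sq (by positivity) hqnn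
    (hq ▸ Selkov.discrim_eq hDne) ?_
  rw [hx, Selkov.coeffD]
  field_simp
  ring

/-- The explicit CSP one-iteration SIM approximation exactly satisfies the implicit CSP
one-iteration SIM equation for the 3D Sel'kov system. -/
theorem selkov_csp_satisfies_implicit (a b k y z ε : ℝ)
    (ha : 0 < a) (hb : 0 < b) (hk : 0 < k) (hy : 0 < y) (hz : 0 < z) (hε : 0 < ε)
    (D q : ℝ)
    (hD : D = k * y * (k * y + ε) + ε * z * (2 * ε * y - k * (a + y ^ 2)))
    (hq : q = 1 + 4 * ε ^ 2 * k * y *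
      (ε * b * y + z * (2 * ε * z * (a + y ^ 2) - y * (k * y + ε * (2 + a + y ^ 2)))) / D ^ 2)
    (hDne : D ≠ 0) (hqnn : 0 ≤ q) (x : ℝ)
    (hx : x = (y * z / k + (y - z * (a + y ^ 2)) / (2 * ε) + k * y ^ 2 / (2 * ε ^ 2)) *
      (1 - Real.sqrt q)) :
    y ^ 2 * z - k * x * y +
      ε * (y ^ 2 * (z * (a + y ^ 2) - b) +
        (2 * y * z - k * x) * (y - z * (a + y ^ 2) - ε * x)) / (k * y) = 0 :=
  selkov_csp_satisfies_implicit_general a b k y z ε hk hy hε D q hD hq hDne hqnn x hx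
end

section
/- Let a, b, k > 0, y > 0 and z > 0. With h₀(y,z) = yz/k and h₁(y,z) = (z−b)/k² + z(a+y²)(y−z)/(k²y), the first-order matching identity of the invariance equation for the 3D Sel'kov system holds: k·h₁(y,z)·y + (∂h₀/∂y)(y,z)·(az + y²z − y) + (∂h₀/∂z)(y,z)·(−az − y²z + b) = 0, where ∂h₀/∂y and ∂h₀/∂z denote partial derivatives. -/
noncomputable def Selkovh0 (k : ℝ) (y z : ℝ) : ℝ := y * z / k

noncomputable def Selkovh1 (a b k : ℝ) (y z : ℝ) : ℝ :=
  (z - b) / k ^ 2 + z * (a + y ^ 2) * (y - z) / (k ^ 2 * y)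

theorem hasDerivAt_selkovh0_fst (k y z : ℝ) :
    HasDerivAt (fun y' : ℝ => Selkovh0 k y' z) (z / k) y := by
  simpa [Selkovh0] using ((hasDerivAt_id y).mul_const z).div_const k

theorem hasDerivAt_selkovh0_snd (k y z : ℝ) :
    HasDerivAt (fun z' : ℝ => Selkovh0 k y z') (y / k) z := by
  simpa [Selkovh0] using ((hasDerivAt_id z).const_mul y).div_const k

theorem mul_selkovh1_mul {k y : ℝ} (hk : k ≠ 0) (hy : y ≠ 0) (a b z : ℝ) :
    k * Selkovh1 a b k y z * y = ((z - b) * y + z * (a + y ^ 2) * (y - z)) / k := by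
  unfold Selkovh1
  field_simp

theorem selkov_first_order_matching_general (a b k y z : ℝ)
    (hk : 0 < k) (hy : 0 < y) :
    k * Selkovh1 a b k y z * y +
      deriv (fun y' : ℝ => Selkovh0 k y' z) y * (a * z + y ^ 2 * z - y) +
      deriv (fun z' : ℝ => Selkovh0 k y z') z * (-a * z - y ^ 2 * z + b) = 0 := by
  rw [mul_selkovh1_mul hk.ne' hy.ne', (hasDerivAt_selkovh0_fst k y z).deriv,
    (hasDerivAt_selkovh0_snd k y z).deriv]
  field_simp
  ring

/-- First-order matching identity of the invariance equation for the 3D Sel'kov system. -/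
theorem selkov_first_order_matching (a b k y z : ℝ)
    (ha : 0 < a) (hb : 0 < b) (hk : 0 < k) (hy : 0 < y) (hz : 0 < z) :
    k * Selkovh1 a b k y z * y +
      deriv (fun y' : ℝ => Selkovh0 k y' z) y * (a * z + y ^ 2 * z - y) +
      deriv (fun z' : ℝ => Selkovh0 k y z') z * (-a * z - y ^ 2 * z + b) = 0 :=
  selkov_first_order_matching_general a b k y z hk hy
end

section
/- Let M and K be positive natural numbers, let G₁ be a real M×K matrix and G₂ a real K×M matrix, and assume the M×M matrix I + G₁G₂ and the K×K matrix I + G₂G₁ are both invertible, with Z₁ = (I + G₁G₂)⁻¹ and Z₂ = (I + G₂G₁)⁻¹. Define the (M+K)×M block matrix â_f with blocks [I; G₂] (identity on top, G₂ below), the (M+K)×K block matrix â_s with blocks [−G₁; I], the M×(M+K) block matrix b̂^f = Z₁·[I | G₁], and the K×(M+K) block matrix b̂^s = Z₂·[−G₂ | I]. Then the CSP orthogonality (duality) conditions hold: b̂^f â_f = I_M, b̂^f â_s = 0, b̂^s â_f = 0, b̂^s â_s = I_K, and â_f b̂^f + â_s b̂^s = I_{M+K}. -/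
open Matrix

/-!
Put `A = [â_f | â_s]` and `B = [b̂^f ; b̂^s]`. Since `[I | G₁]·[I ; G₂] = I + G₁G₂`,
`[I | G₁]·[-G₁ ; I] = 0`, `[-G₂ | I]·[I ; G₂] = 0` and `[-G₂ | I]·[-G₁ ; I] = I + G₂G₁`,
multiplying on the left by `Z₁` and `Z₂` gives the four duality relations, i.e. `B A = I`.
For square matrices a left inverse is a right inverse, so `A B = â_f b̂^f + â_s b̂^s = I`.
-/

namespace Matrix

variable {m k R : Type*} [Fintype m] [Fintype k] [DecidableEq m] [DecidableEq k] [CommRing R]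

theorem mul_add_mul_eq_one_of_biorthogonal {af : Matrix (m ⊕ k) m R} {as : Matrix (m ⊕ k) k R}
    {bf : Matrix m (m ⊕ k) R} {bs : Matrix k (m ⊕ k) R} (hff : bf * af = 1) (hfs : bf * as = 0)
    (hsf : bs * af = 0) (hss : bs * as = 1) :
    af * bf + as * bs = 1 := by
  rw [← fromCols_mul_fromRows, fromCols_mul_fromRows_eq_one_comm (Equiv.refl _),
    fromRows_mul_fromCols, hff, hfs, hsf, hss, fromBlocks_one]

end Matrix

theorem csp_basis_orthogonality_general (M K : ℕ)
    (G₁ : Matrix (Fin M) (Fin K) ℝ) (G₂ : Matrix (Fin K) (Fin M) ℝ)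
    (h₁ : IsUnit (1 + G₁ * G₂)) (h₂ : IsUnit (1 + G₂ * G₁))
    (Z₁ : Matrix (Fin M) (Fin M) ℝ) (hZ₁ : Z₁ = (1 + G₁ * G₂)⁻¹)
    (Z₂ : Matrix (Fin K) (Fin K) ℝ) (hZ₂ : Z₂ = (1 + G₂ * G₁)⁻¹)
    (af : Matrix (Fin M ⊕ Fin K) (Fin M) ℝ) (haf : af = Matrix.fromRows 1 G₂)
    (as : Matrix (Fin M ⊕ Fin K) (Fin K) ℝ) (has : as = Matrix.fromRows (-G₁) 1)
    (bf : Matrix (Fin M) (Fin M ⊕ Fin K) ℝ) (hbf : bf = Z₁ * Matrix.fromCols 1 G₁)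
    (bs : Matrix (Fin K) (Fin M ⊕ Fin K) ℝ) (hbs : bs = Z₂ * Matrix.fromCols (-G₂) 1) :
    bf * af = 1 ∧ bf * as = 0 ∧ bs * af = 0 ∧ bs * as = 1 ∧ af * bf + as * bs = 1 := by
  have hinv₁ : Z₁ * (1 + G₁ * G₂) = 1 := hZ₁ ▸ nonsing_inv_mul _ ((isUnit_iff_isUnit_det _).mp h₁)
  have hinv₂ : Z₂ * (1 + G₂ * G₁) = 1 := hZ₂ ▸ nonsing_inv_mul _ ((isUnit_iff_isUnit_det _).mp h₂)
  have hff : bf * af = 1 := by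
    rwa [hbf, haf, Matrix.mul_assoc, fromCols_mul_fromRows, Matrix.one_mul]
  have hfs : bf * as = 0 := by
    rw [hbf, has, Matrix.mul_assoc, fromCols_mul_fromRows]; simp
  have hsf : bs * af = 0 := by
    rw [hbs, haf, Matrix.mul_assoc, fromCols_mul_fromRows]; simp
  have hss : bs * as = 1 := by
    rwa [hbs, has, Matrix.mul_assoc, fromCols_mul_fromRows, Matrix.neg_mul, Matrix.mul_neg,
      neg_neg, Matrix.one_mul, add_comm]
  exact ⟨hff, hfs, hsf, hss, mul_add_mul_eq_one_of_biorthogonal hff hfs hsf hss⟩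

/-- The CSP basis vectors after one `b`-refinement and one `a`-refinement satisfy the
CSP orthogonality (duality) conditions. -/
theorem csp_basis_orthogonality (M K : ℕ) (hM : 0 < M) (hK : 0 < K)
    (G₁ : Matrix (Fin M) (Fin K) ℝ) (G₂ : Matrix (Fin K) (Fin M) ℝ)
    (h₁ : IsUnit (1 + G₁ * G₂)) (h₂ : IsUnit (1 + G₂ * G₁))
    (Z₁ : Matrix (Fin M) (Fin M) ℝ) (hZ₁ : Z₁ = (1 + G₁ * G₂)⁻¹)
    (Z₂ : Matrix (Fin K) (Fin K) ℝ) (hZ₂ : Z₂ = (1 + G₂ * G₁)⁻¹)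
    (af : Matrix (Fin M ⊕ Fin K) (Fin M) ℝ) (haf : af = Matrix.fromRows 1 G₂)
    (as : Matrix (Fin M ⊕ Fin K) (Fin K) ℝ) (has : as = Matrix.fromRows (-G₁) 1)
    (bf : Matrix (Fin M) (Fin M ⊕ Fin K) ℝ) (hbf : bf = Z₁ * Matrix.fromCols 1 G₁)
    (bs : Matrix (Fin K) (Fin M ⊕ Fin K) ℝ) (hbs : bs = Z₂ * Matrix.fromCols (-G₂) 1) :
    bf * af = 1 ∧ bf * as = 0 ∧ bs * af = 0 ∧ bs * as = 1 ∧ af * bf + as * bs = 1 :=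
  csp_basis_orthogonality_general M K G₁ G₂ h₁ h₂ Z₁ hZ₁ Z₂ hZ₂ af haf as has bf hbf bs hbs
end
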